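/- Let N be a group and H a finite central subgroup of N with |H| = k, such that N/H is abelian. Then g^k ∈ Z(N) for every g ∈ N; that is, the set of k-th powers of N is contained in the center of N. -/
import Mathlib


/-- If `H` is a finite central subgroup of `N` of order `k` with `N/H` abelian, then
`g^k ∈ Z(N)` for every `g ∈ N`. -/
theorem pow_card_mem_center {N : Type*} [Group N] (H : Subgroup N) [H.Normal]
    (hcent : H ≤ Subgroup.center N) [Finite H] (k : ℕ) (hk : Nat.card H = k)
    (habel : ∀ x y : N ⧸ H, x * y = y * x) :
    ∀ g : N, g ^ k ∈ Subgroup.center N := by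
  intro g
  rw [Subgroup.mem_center_iff]
  intro x
  -- c = g⁻¹ * (x * g * x⁻¹) ∈ H
  have hc : g⁻¹ * (x * g * x⁻¹) ∈ H := by
    rw [← QuotientGroup.eq_one_iff]
    simp only [QuotientGroup.mk_mul, QuotientGroup.mk_inv]
    rw [habel (x : N ⧸ H) (g : N ⧸ H)]
    group
  set c : N := g⁻¹ * (x * g * x⁻¹) with hcdef
  have hcomm : ∀ y : N, Commute c y := fun y => (Subgroup.mem_center_iff.mp (hcent hc) y).symm
  have hck : c ^ k = 1 := by
    have : (⟨c, hc⟩ : H) ^ k = 1 := by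
      rw [← hk]; exact pow_card_eq_one'
    have := congrArg (Subgroup.subtype H) this
    simpa using this
  have hconj : x * g * x⁻¹ = g * c := by rw [hcdef]; group
  have : x * g ^ k * x⁻¹ = (x * g * x⁻¹) ^ k := conj_pow.symm
  rw [hconj, (hcomm g).symm.mul_pow, hck, mul_one] at this
  have := congrArg (· * x) this
  simpa [mul_assoc] using this
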